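/- Let F_4 = F_2(w) with w² + w + 1 = 0, and let B = F_4[x,y]/(y² + y + x³ + w). For every integer n ≥ 1, writing X = x^{4^n} and Y = y^{4^n} in B, one has ((X+x)(Y⁴+y⁴) + (X⁴+x⁴)(x²X + x³ + 1) + X + x)·(X^{16} + x) = ((Y⁴+y)(X⁴+X) + X^{13} + xX^{12} + xX⁹ + x)·(x²X⁸ + (X⁴+x)(Y⁴+y) + X⁴) in B. (This is the identity, after clearing denominators, proving case (iii) of the Lara Rodríguez–Thakur conjecture: the conjectured formula for the ratio α_{n,1} = ζ_A(q^n−1, q^{n+1}−q^n)/ζ_A(q^{n+1}−1) agrees with the shtuka-theoretic formula.) -/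

import Mathlib

/-!
`F₄ = F₂(w)` with `w² + w + 1 = 0` is formalised as an arbitrary field `F` with
`4` elements together with an element `w` satisfying `w² + w + 1 = 0`.
`B = F₄[x,y]/(y² + y + x³ + w)` is realised as the quotient of the bivariate
polynomial ring `Polynomial (Polynomial F)` (inner variable `x`, outer variable
`y`) by the ideal generated by the defining relation.
-/

open Polynomial

/-- The coordinate ring `B = F₄[x,y]/(y² + y + x³ + w)`. -/
abbrev Bthree (F : Type) [Field F] (w : F) : Type :=
  Polynomial (Polynomial F) ⧸
    Ideal.span {(Polynomial.X ^ 2 + Polynomial.X +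
      Polynomial.C (Polynomial.X ^ 3 + Polynomial.C w) : Polynomial (Polynomial F))}

/-- The image `x` of the inner variable in `B`. -/
noncomputable def xB (F : Type) [Field F] (w : F) : Bthree F w :=
  Ideal.Quotient.mk _ (Polynomial.C Polynomial.X)

/-- The image `y` of the outer variable in `B`. -/
noncomputable def yB (F : Type) [Field F] (w : F) : Bthree F w :=
  Ideal.Quotient.mk _ Polynomial.X

/-!
The identity does not depend on `n`: it holds for any two points `(x, y)` and `(X, Y)` of the
curve `y² + y = x³ + w` over a ring of characteristic `2`, and `(x^{4^n}, y^{4^n})` is such a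
point because Frobenius fixes `w ∈ F₄`. In characteristic `2` with `w² + w = 1`, squaring the
curve equation twice gives `y⁴ = y + x⁶ + x³ + 1`, and `s = Y + y` satisfies
`s² = s + X³ + x³`. After these substitutions both sides are polynomials in `x`, `X`, `s`, and
they agree modulo `s² = s + X³ + x³`.
-/

section CharTwo

variable {R : Type*} [CommRing R] [CharP R 2] {w x y : R}

theorem pow_four_eq_of_curve (hw : w ^ 2 + w + 1 = 0) (h : y ^ 2 + y + x ^ 3 + w = 0) :
    y ^ 4 = y + x ^ 6 + x ^ 3 + 1 := by
  linear_combination (norm := (ring_nf; reduce_mod_char!)) (y ^ 2 + y + x ^ 3 + w + 1) * h + hw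

theorem add_sq_of_curve {X Y : R} (h : y ^ 2 + y + x ^ 3 + w = 0)
    (H : Y ^ 2 + Y + X ^ 3 + w = 0) : (Y + y) ^ 2 = Y + y + X ^ 3 + x ^ 3 := by
  linear_combination (norm := (ring_nf; reduce_mod_char!)) H + h

theorem lara_rodriguez_thakur_identity {X Y : R} (hw : w ^ 2 + w + 1 = 0)
    (h : y ^ 2 + y + x ^ 3 + w = 0) (H : Y ^ 2 + Y + X ^ 3 + w = 0) :
    ((X + x) * (Y ^ 4 + y ^ 4) + (X ^ 4 + x ^ 4) * (x ^ 2 * X + x ^ 3 + 1) + X + x) *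
        (X ^ 16 + x) =
      ((Y ^ 4 + y) * (X ^ 4 + X) + X ^ 13 + x * X ^ 12 + x * X ^ 9 + x) *
        (x ^ 2 * X ^ 8 + (X ^ 4 + x) * (Y ^ 4 + y) + X ^ 4) := by
  rw [pow_four_eq_of_curve hw H, pow_four_eq_of_curve hw h]
  linear_combination (norm := (ring_nf; reduce_mod_char!))
    (X ^ 4 + X) * (X ^ 4 + x) * add_sq_of_curve h H

end CharTwo

theorem curve_pow_of_pow_eq {R : Type*} [CommRing R] (p k : ℕ) [ExpChar R p] {w x y : R}
    (hw : w ^ p ^ k = w) (h : y ^ 2 + y + x ^ 3 + w = 0) :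
    (y ^ p ^ k) ^ 2 + y ^ p ^ k + (x ^ p ^ k) ^ 3 + w = 0 := by
  simpa only [map_add, map_pow, map_zero, iterateFrobenius_def, hw] using
    congrArg (iterateFrobenius R p k) h

theorem yB_sq_add_yB_add_xB_pow_three_add_algebraMap (F : Type) [Field F] (w : F) :
    yB F w ^ 2 + yB F w + xB F w ^ 3 + (algebraMap F (Bthree F w) : F →+* Bthree F w) w = 0 := by
  have h : (Ideal.Quotient.mk _ (X ^ 2 + X + C (X ^ 3 + C w)) : Bthree F w) = 0 :=
    Ideal.Quotient.eq_zero_iff_mem.mpr (Ideal.mem_span_singleton_self _)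
  rw [← Ideal.Quotient.mk_algebraMap]
  simpa [xB, yB, Polynomial.algebraMap_apply, add_assoc] using h

theorem statement18_general (F : Type) [Field F] [Fintype F] (hF : Fintype.card F = 4)
    (w : F) (hw : w ^ 2 + w + 1 = 0) (n : ℕ) :
    ∀ X Y : Bthree F w, X = xB F w ^ 4 ^ n → Y = yB F w ^ 4 ^ n →
      ((X + xB F w) * (Y ^ 4 + yB F w ^ 4) +
            (X ^ 4 + xB F w ^ 4) * (xB F w ^ 2 * X + xB F w ^ 3 + 1) + X + xB F w) *
          (X ^ 16 + xB F w) =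
        ((Y ^ 4 + yB F w) * (X ^ 4 + X) + X ^ 13 + xB F w * X ^ 12 + xB F w * X ^ 9 +
            xB F w) *
          (xB F w ^ 2 * X ^ 8 + (X ^ 4 + xB F w) * (Y ^ 4 + yB F w) + X ^ 4) := by
  rintro X Y rfl rfl
  rcases subsingleton_or_nontrivial (Bthree F w) with _ | _
  · exact Subsingleton.elim _ _
  have : CharP F 2 := charP_of_card_eq_prime_pow (f := 2) hF
  have : CharP (Bthree F w) 2 := charP_of_injective_algebraMap' F 2
  let ι : F →+* Bthree F w := algebraMap F (Bthree F w)
  have hfix : ι w ^ 2 ^ (2 * n) = ι w := by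
    rw [← map_pow, pow_mul, show 2 ^ 2 = Fintype.card F from hF.symm, FiniteField.pow_card_pow]
  have hcurve := yB_sq_add_yB_add_xB_pow_three_add_algebraMap F w
  have hpt := curve_pow_of_pow_eq (R := Bthree F w) 2 (2 * n) hfix hcurve
  rw [pow_mul, show 2 ^ 2 = 4 from rfl] at hpt
  have hw' : ι w ^ 2 + ι w + 1 = 0 := by simpa using congrArg ι hw
  exact lara_rodriguez_thakur_identity (R := Bthree F w) hw' hcurve hpt

/-- let `F₄ = F₂(w)` be a field with four elements, where
`w² + w + 1 = 0`.  For every `n ≥ 1`, with `X = x^{4^n}` and `Y = y^{4^n}` in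
`B = F₄[x,y]/(y² + y + x³ + w)`,
`((X+x)(Y⁴+y⁴) + (X⁴+x⁴)(x²X + x³ + 1) + X + x)·(X¹⁶ + x)
  = ((Y⁴+y)(X⁴+X) + X¹³ + xX¹² + xX⁹ + x)·(x²X⁸ + (X⁴+x)(Y⁴+y) + X⁴)`. -/
theorem statement18 (F : Type) [Field F] [Fintype F] (hF : Fintype.card F = 4)
    (w : F) (hw : w ^ 2 + w + 1 = 0) (n : ℕ) (hn : 1 ≤ n) :
    ∀ X Y : Bthree F w, X = xB F w ^ 4 ^ n → Y = yB F w ^ 4 ^ n →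
      ((X + xB F w) * (Y ^ 4 + yB F w ^ 4) +
            (X ^ 4 + xB F w ^ 4) * (xB F w ^ 2 * X + xB F w ^ 3 + 1) + X + xB F w) *
          (X ^ 16 + xB F w) =
        ((Y ^ 4 + yB F w) * (X ^ 4 + X) + X ^ 13 + xB F w * X ^ 12 + xB F w * X ^ 9 +
            xB F w) *
          (xB F w ^ 2 * X ^ 8 + (X ^ 4 + xB F w) * (Y ^ 4 + yB F w) + X ^ 4) :=
  statement18_general F hF w hw n
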